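/- If T is sub-n-normal and S is its minimal n-normal extension, and T is invertible, then S is invertible. -/

import Mathlib

/-!
For `n = 0` every closed `S`-invariant subspace containing `H` is admissible, so `V` is onto and
`S` is conjugate to `T`. For `n ≥ 1` it suffices to invert `N = Sⁿ`. Invertibility of `T` writes
each `x ∈ H` as `Nᵏ yₖ` with `‖yₖ‖ ≤ ‖T⁻¹‖ⁿᵏ ‖x‖`, and since `‖f(N) Nᵏ‖ ≤ δᵏ` for a tent function
`f` of radius `δ < ‖T⁻¹‖⁻ⁿ` at `0`, this forces `f(N) x = 0`. By Fuglede's theorem `S` commutes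
with `f(N)`, so `ker f(N)` is a closed `S`-invariant subspace containing `H` that reduces `N`;
minimality gives `f(N) = 0`, and by spectral mapping `0 ∉ σ(N)`.
-/

open ContinuousLinearMap

section

variable {H K : Type*} [NormedAddCommGroup H] [InnerProductSpace ℂ H] [CompleteSpace H]
  [NormedAddCommGroup K] [InnerProductSpace ℂ K] [CompleteSpace K]

/-- `S ∈ B(K)` is an n-normal extension of `T ∈ B(H)` along the isometric embedding
`V : H → K` if `Sⁿ` is normal, `S` leaves (the image of) `H` invariant and `S|_H = T`. -/
def IsNNormalExt (n : ℕ) (V : H →ₗᵢ[ℂ] K) (S : K →L[ℂ] K) (T : H →L[ℂ] H) : Prop :=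
  IsStarNormal (S ^ n) ∧ ∀ x : H, S (V x) = V (T x)

/-- `S` is a *minimal* n-normal extension of `T` if no proper closed subspace of `K`
containing `H` and invariant under `S` yields, by restriction, an n-normal extension of `T`. -/
def IsMinimalNNormalExt (n : ℕ) (V : H →ₗᵢ[ℂ] K) (S : K →L[ℂ] K) (T : H →L[ℂ] H) : Prop :=
  IsNNormalExt n V S T ∧
  ∀ (M : Submodule ℂ K) (hM : IsClosed (M : Set K)) (hinv : ∀ y ∈ M, S y ∈ M)
    (_ : ∀ x : H, V x ∈ M),
    (letI : CompleteSpace M := hM.completeSpace_coe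
     IsStarNormal ((ContinuousLinearMap.codRestrict (S.comp M.subtypeL) M
        (fun y => hinv y y.2)) ^ n)) →
    M = ⊤

/-- The approximate point spectrum. -/
def approxPointSpectrum {E : Type*} [NormedAddCommGroup E] [NormedSpace ℂ E]
    (T : E →L[ℂ] E) : Set ℂ :=
  {lam : ℂ | ∃ g : ℕ → E, (∀ m, ‖g m‖ = 1) ∧
    Filter.Tendsto (fun m => ‖T (g m) - lam • g m‖) Filter.atTop (nhds 0)}

lemma ContinuousLinearMap.norm_pow_apply_le {𝕜 E : Type*} [NontriviallyNormedField 𝕜]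
    [SeminormedAddCommGroup E] [NormedSpace 𝕜 E] (A : E →L[𝕜] E) (k : ℕ) (x : E) :
    ‖(A ^ k) x‖ ≤ ‖A‖ ^ k * ‖x‖ := by
  induction k with
  | zero => simp
  | succ k ih =>
    calc ‖(A ^ (k + 1)) x‖ = ‖A ((A ^ k) x)‖ := by rw [pow_succ']; rfl
      _ ≤ ‖A‖ * (‖A‖ ^ k * ‖x‖) := (A.le_opNorm _).trans (by gcongr)
      _ = ‖A‖ ^ (k + 1) * ‖x‖ := by ring

lemma ContinuousLinearMap.restrict_pow {R E : Type*} [Semiring R] [TopologicalSpace E]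
    [AddCommMonoid E] [Module R E] {p : Submodule R E} (A : E →L[R] E) (hA : ∀ y ∈ p, A y ∈ p)
    (k : ℕ) (hAk : ∀ y ∈ p, (A ^ k) y ∈ p) : A.restrict hA ^ k = (A ^ k).restrict hAk := by
  apply coe_injective
  simp only [toLinearMap_pow, toLinearMap_restrict]
  exact Module.End.pow_restrict k hA

lemma ContinuousLinearMap.pow_apply_mem {R E : Type*} [Semiring R] [TopologicalSpace E]
    [AddCommMonoid E] [Module R E] {p : Submodule R E} (A : E →L[R] E) (hA : ∀ y ∈ p, A y ∈ p)
    (k : ℕ) : ∀ y ∈ p, (A ^ k) y ∈ p := by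
  simpa only [← toLinearMap_pow, coe_coe] using Module.End.pow_apply_mem_of_forall_mem k hA

lemma ContinuousLinearMap.apply_mem_ker_of_commute {R E : Type*} [Semiring R]
    [TopologicalSpace E] [AddCommMonoid E] [Module R E] {F A : E →L[R] E} (h : Commute F A) :
    ∀ y ∈ F.ker, A y ∈ F.ker := fun y hy ↦ by
  change F y = 0 at hy
  change F (A y) = 0
  rw [← mul_apply_eq_comp, h.eq, mul_apply_eq_comp, hy, map_zero]

lemma IsStarNormal.restrict {𝕜 E : Type*} [RCLike 𝕜] [NormedAddCommGroup E]
    [InnerProductSpace 𝕜 E] [CompleteSpace E] {M : Submodule 𝕜 E} [CompleteSpace M]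
    {B : E →L[𝕜] E} (hB : IsStarNormal B) (hBM : ∀ y ∈ M, B y ∈ M)
    (hBM' : ∀ y ∈ M, star B y ∈ M) : IsStarNormal (B.restrict hBM) := by
  have hstar : star (B.restrict hBM) = (star B).restrict hBM' := by
    refine ((eq_adjoint_iff _ _).2 fun u v ↦ ?_).symm
    simp only [Submodule.coe_inner, coe_restrict_apply]
    rw [star_eq_adjoint, adjoint_inner_left]
  refine ⟨?_⟩
  rw [hstar]
  ext y
  exact congr($(hB.star_comm_self.eq) y)

lemma exists_pow_apply_eq_of_semiconj {𝕜 E F : Type*} [NontriviallyNormedField 𝕜]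
    [SeminormedAddCommGroup E] [NormedSpace 𝕜 E] [SeminormedAddCommGroup F] [NormedSpace 𝕜 F]
    {V : E →ₗᵢ[𝕜] F} {S : F →L[𝕜] F} {T : E →L[𝕜] E}
    (hST : ∀ x, S (V x) = V (T x)) (hT : IsUnit T) (m : ℕ) (x : E) :
    ∃ y, (S ^ m) y = V x ∧ ‖y‖ ≤ ‖(↑hT.unit⁻¹ : E →L[𝕜] E)‖ ^ m * ‖x‖ := by
  set Ti : E →L[𝕜] E := ↑hT.unit⁻¹
  have hsemi : Function.Semiconj V T S := fun x ↦ (hST x).symm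
  have hcomm : Commute T Ti := hT.mul_val_inv.trans hT.val_inv_mul.symm
  have hTTi : (T ^ m) ((Ti ^ m) x) = x := by
    rw [← mul_apply_eq_comp, ← hcomm.mul_pow, hT.mul_val_inv, one_pow, one_apply_eq_self]
  refine ⟨V ((Ti ^ m) x), ?_, by simpa only [V.norm_map] using Ti.norm_pow_apply_le m x⟩
  simp only [pow_apply_eq_iterate, ← (hsemi.iterate_right m) _] at hTTi ⊢
  rw [hTTi]

noncomputable def tent (δ : ℝ) (z : ℂ) : ℂ := ((max (1 - ‖z‖ / δ) 0 : ℝ) : ℂ)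

lemma continuous_tent (δ : ℝ) : Continuous (tent δ) := by
  unfold tent; fun_prop

lemma tent_zero {δ : ℝ} : tent δ 0 = 1 := by
  simp [tent]

lemma norm_tent_mul_pow_le {δ : ℝ} (hδ : 0 < δ) (k : ℕ) (z : ℂ) :
    ‖tent δ z‖ * ‖z‖ ^ k ≤ δ ^ k := by
  rcases le_or_gt δ ‖z‖ with hz | hz
  · have : 1 - ‖z‖ / δ ≤ 0 := by rw [sub_nonpos, one_le_div hδ]; exact hz
    simp [tent, max_eq_right this, pow_nonneg hδ.le]
  · have h0 : 0 ≤ 1 - ‖z‖ / δ := by rw [sub_nonneg, div_le_one hδ]; exact hz.le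
    have h1 : ‖tent δ z‖ ≤ 1 := by
      rw [tent, max_eq_left h0, Complex.norm_real, Real.norm_of_nonneg h0]
      linarith [div_nonneg (norm_nonneg z) hδ.le]
    calc ‖tent δ z‖ * ‖z‖ ^ k ≤ 1 * δ ^ k := by gcongr
      _ = δ ^ k := one_mul _

lemma norm_cfc_tent_mul_pow_le {A : Type*} [CStarAlgebra A] {a : A} (ha : IsStarNormal a)
    {δ : ℝ} (hδ : 0 < δ) (k : ℕ) : ‖cfc (tent δ) a * a ^ k‖ ≤ δ ^ k := by
  rw [← cfc_pow_id (R := ℂ) a k, ← cfc_mul (tent δ) (· ^ k) a (continuous_tent δ).continuousOn]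
  exact norm_cfc_le (by positivity) fun z _ ↦ by simpa [norm_pow] using norm_tent_mul_pow_le hδ k z

lemma cfc_tent_ne_zero {A : Type*} [CStarAlgebra A] {a : A} (ha : IsStarNormal a)
    (h0 : (0 : ℂ) ∈ spectrum ℂ a) (δ : ℝ) : cfc (tent δ) a ≠ 0 := by
  intro h
  have h1 : tent δ 0 ∈ spectrum ℂ (cfc (tent δ) a) := by
    rw [cfc_map_spectrum (tent δ) a ha (continuous_tent δ).continuousOn]
    exact ⟨0, h0, rfl⟩
  simp [h, tent_zero, spectrum.mem_iff] at h1

lemma cfc_tent_apply_eq_zero {E : Type*} [NormedAddCommGroup E] [InnerProductSpace ℂ E]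
    [CompleteSpace E] {N : E →L[ℂ] E} (hN : IsStarNormal N) {δ r C : ℝ} (hδ : 0 < δ)
    (hr : 0 ≤ r) (hδr : δ * r < 1) {x : E} (hx : ∀ k, ∃ y, (N ^ k) y = x ∧ ‖y‖ ≤ r ^ k * C) :
    cfc (tent δ) N x = 0 := by
  have hbound : ∀ k : ℕ, ‖cfc (tent δ) N x‖ ≤ (δ * r) ^ k * C := fun k ↦ by
    obtain ⟨y, rfl, hy⟩ := hx k
    calc ‖cfc (tent δ) N ((N ^ k) y)‖ = ‖(cfc (tent δ) N * N ^ k) y‖ := rfl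
      _ ≤ δ ^ k * (r ^ k * C) :=
        (le_opNorm _ _).trans (by gcongr; exact norm_cfc_tent_mul_pow_le hN hδ k)
      _ = (δ * r) ^ k * C := by ring
  have hlim : Filter.Tendsto (fun k : ℕ ↦ (δ * r) ^ k * C) Filter.atTop (nhds 0) := by
    simpa using (tendsto_pow_atTop_nhds_zero_of_lt_one (by positivity) hδr).mul_const C
  exact norm_le_zero_iff.1 (ge_of_tendsto' hlim hbound)

section

variable {E F : Type*} [NormedAddCommGroup E] [InnerProductSpace ℂ E]
  [NormedAddCommGroup F] [InnerProductSpace ℂ F] [CompleteSpace F]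

lemma IsMinimalNNormalExt.eq_top {n : ℕ} {V : E →ₗᵢ[ℂ] F} {S : F →L[ℂ] F} {T : E →L[ℂ] E}
    (hmin : IsMinimalNNormalExt n V S T) {M : Submodule ℂ F} (hM : IsClosed (M : Set F))
    (hSM : ∀ y ∈ M, S y ∈ M) (hNM : ∀ y ∈ M, star (S ^ n) y ∈ M) (hVM : ∀ x, V x ∈ M) :
    M = ⊤ := by
  refine hmin.2 M hM hSM hVM ?_
  let : CompleteSpace M := hM.completeSpace_coe
  change IsStarNormal (S.restrict hSM ^ n)
  rw [S.restrict_pow hSM n (S.pow_apply_mem hSM n)]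
  exact hmin.1.1.restrict _ hNM

lemma IsMinimalNNormalExt.surjective_of_zero [CompleteSpace E] {V : E →ₗᵢ[ℂ] F} {S : F →L[ℂ] F}
    {T : E →L[ℂ] E} (hmin : IsMinimalNNormalExt 0 V S T) : Function.Surjective V := by
  have hclosed : IsClosed (V.toLinearMap.range : Set F) := by
    rw [LinearMap.coe_range]
    exact V.isometry.isClosedEmbedding.isClosed_range
  have hrange := hmin.eq_top hclosed (by rintro _ ⟨x, rfl⟩; exact ⟨T x, (hmin.1.2 x).symm⟩)
    (by simp) (fun x ↦ ⟨x, rfl⟩)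
  exact LinearMap.range_eq_top.1 hrange

lemma isUnit_of_semiconj_of_surjective [CompleteSpace E] {V : E →ₗᵢ[ℂ] F} {S : F →L[ℂ] F}
    {T : E →L[ℂ] E} (hST : ∀ x, S (V x) = V (T x)) (hV : Function.Surjective V) (hT : IsUnit T) :
    IsUnit S := by
  rw [isUnit_iff_bijective] at hT ⊢
  have hVbij : Function.Bijective V := ⟨V.injective, hV⟩
  have hcomp : ⇑S ∘ V = V ∘ T := funext hST
  exact (Function.Bijective.of_comp_iff S hVbij).1 (hcomp ▸ hVbij.comp hT)

lemma IsMinimalNNormalExt.isUnit_pow {n : ℕ} {V : E →ₗᵢ[ℂ] F} {S : F →L[ℂ] F}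
    {T : E →L[ℂ] E} (hmin : IsMinimalNNormalExt n V S T) (hT : IsUnit T) : IsUnit (S ^ n) := by
  set N := S ^ n
  have hN : IsStarNormal N := hmin.1.1
  set r := ‖(↑hT.unit⁻¹ : E →L[ℂ] E)‖ ^ n
  set δ := 1 / (r + 1)
  have hδ : 0 < δ := by positivity
  have hδr : δ * r < 1 := by
    rw [div_mul_eq_mul_div, one_mul, div_lt_one (by positivity)]
    exact lt_add_one r
  have hSN : Commute N S := (Commute.refl S).pow_left n
  have hVF : ∀ x, cfc (tent δ) N (V x) = 0 := fun x ↦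
    cfc_tent_apply_eq_zero hN hδ (by positivity) hδr fun k ↦ by
      simpa only [N, r, ← pow_mul] using exists_pow_apply_eq_of_semiconj hmin.1.2 hT (n * k) x
  -- `commute_star_left` is Fuglede's theorem
  have hker : (cfc (tent δ) N).ker = ⊤ := hmin.eq_top (isClosed_ker _)
    (apply_mem_ker_of_commute (hSN.cfc (hN.commute_star_left hSN) _))
    (apply_mem_ker_of_commute (hN.star_comm_self.symm.cfc (Commute.refl _) _)) hVF
  by_contra hNu
  exact cfc_tent_ne_zero hN ((spectrum.zero_mem_iff ℂ).2 hNu) δ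
    (coe_injective (LinearMap.ker_eq_top.1 hker))

end

theorem minimal_extension_invertible
    (n : ℕ) (T : H →L[ℂ] H) (V : H →ₗᵢ[ℂ] K) (S : K →L[ℂ] K)
    (hmin : IsMinimalNNormalExt n V S T) (hT : IsUnit T) :
    IsUnit S := by
  rcases n.eq_zero_or_pos with rfl | hn
  · exact isUnit_of_semiconj_of_surjective hmin.1.2 hmin.surjective_of_zero hT
  · exact (isUnit_pow_iff hn.ne').1 (hmin.isUnit_pow hT)

end
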